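/- Suppose β(x) = 1/|R| for all x ∈ R, and let π be a stationary distribution of M_R. Then for every x ∈ R: (1 − (1−α)·|F_x|/|R|)·π(x) = α/|R| + ((1−α)/|R|)·∑_{y∈R : xR ⊊ yR} |ann(y)|·π(y), where the sum is over all y ∈ R whose principal ideal strictly contains the principal ideal generated by x. -/

import Mathlib

open Finset

open scoped Classical

/-- The multiplication part `B_R` of the transition matrix:
`B_R(a,b) = ∑_{x ∈ R : a·x = b} β(x)`. -/
noncomputable def Bmat (R : Type) [CommRing R] [Fintype R] (β : R → ℝ) :
    Matrix R R ℝ :=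
  fun a b => ∑ x ∈ Finset.univ.filter (fun x => a * x = b), β x

/-- The transition matrix `M_R(a,b) = α/|R| + (1−α)·B_R(a,b)`. -/
noncomputable def Mmat (R : Type) [CommRing R] [Fintype R] (α : ℝ) (β : R → ℝ) :
    Matrix R R ℝ :=
  fun a b => α / (Fintype.card R : ℝ) + (1 - α) * Bmat R β a b

/-- The annihilator ideal `ann(a) = {x ∈ R : x·a = 0}`. -/
def annId {R : Type} [CommRing R] (a : R) : Ideal R where
  carrier := {x | x * a = 0}
  add_mem' := by
    intro x y hx hy
    simp only [Set.mem_setOf_eq] at *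
    rw [add_mul, hx, hy, add_zero]
  zero_mem' := by simp
  smul_mem' := by
    intro c x hx
    simp only [smul_eq_mul, Set.mem_setOf_eq] at *
    rw [mul_assoc, hx, mul_zero]

/-!
For uniform `β`, the equation `a * r = b` has `|ann(a)|` solutions when `a ∣ b` (a coset of
`ann(a)`) and none otherwise, so stationarity reads
`π(b) = α/|R| + ((1−α)/|R|) · ∑_{a ∣ b} |ann(a)| · π(a)`.
The divisors of `x` are the `a` with `xR ⊊ aR` and the generators of `xR`. The right-hand side
depends on `b` only through its divisors, so `π` is constant on the generators of `xR`, and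
summing `|ann(a)|` over those generators counts `F_x`.
-/

section MultiplicationCounts

variable {R : Type} [CommRing R] [Fintype R]

lemma card_filter_mul_eq (c a : R) :
    #{r | c * r = a} = if c ∣ a then #{r | r * c = 0} else 0 := by
  split_ifs with h
  · obtain ⟨r₀, rfl⟩ := h
    refine Finset.card_bij (fun r _ => r - r₀) (fun r hr => ?_) (fun r _ s _ h => by simpa using h)
      (fun s hs => ⟨s + r₀, ?_, by ring⟩)
    · simp only [mem_filter, mem_univ, true_and] at hr ⊢
      linear_combination hr
    · simp only [mem_filter, mem_univ, true_and] at hs ⊢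
      linear_combination hs
  · exact Finset.card_eq_zero.mpr (Finset.filter_eq_empty_iff.mpr fun r _ hr => h ⟨r, hr.symm⟩)

lemma card_filter_mul_eq_zero_of_span_eq {a b : R}
    (h : Ideal.span ({a} : Set R) = Ideal.span {b}) :
    #{r | r * a = 0} = #{r | r * b = 0} := by
  obtain ⟨t, rfl⟩ : a ∣ b := Ideal.span_singleton_le_span_singleton.mp h.ge
  obtain ⟨u, hu⟩ : a * t ∣ a := Ideal.span_singleton_le_span_singleton.mp h.le
  congr 1
  ext r
  simp only [mem_filter, mem_univ, true_and]
  exact ⟨fun hr => by rw [← mul_assoc, hr, zero_mul],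
    fun hr => by rw [hu, ← mul_assoc, hr, zero_mul]⟩

lemma isUnit_mk_annId_iff (x r : R) :
    IsUnit (Ideal.Quotient.mk (annId x) r) ↔ Ideal.span ({r * x} : Set R) = Ideal.span {x} := by
  have hle : Ideal.span ({r * x} : Set R) ≤ Ideal.span {x} :=
    Ideal.span_singleton_le_span_singleton.mpr (dvd_mul_left x r)
  rw [isUnit_iff_exists_inv, hle.ge_iff_eq.symm, Ideal.span_singleton_le_span_singleton,
    Ideal.Quotient.mk_surjective.exists]
  refine exists_congr fun s => ?_
  rw [← map_mul, ← map_one (Ideal.Quotient.mk (annId x)), Ideal.Quotient.eq]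
  change (r * s - 1) * x = 0 ↔ _
  constructor <;> intro h <;> linear_combination -h

/-- `r ↦ r * x` maps the units of `R / ann(x)` onto the generators of `xR`, and its fibre over
each generator `a` is a coset of `ann(x)`, which has the size of `ann(a)`. -/
lemma card_filter_isUnit_mk_annId (x : R) :
    #{r | IsUnit (Ideal.Quotient.mk (annId x) r)} =
      ∑ a with Ideal.span ({a} : Set R) = Ideal.span {x}, #{r | r * a = 0} := by
  simp_rw [isUnit_mk_annId_iff]
  rw [Finset.card_eq_sum_card_fiberwise (f := fun r => r * x)
    (t := {a | Ideal.span ({a} : Set R) = Ideal.span {x}}) fun r hr => by simpa using hr]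
  refine Finset.sum_congr rfl fun a ha => ?_
  rw [mem_filter] at ha
  have hfiber : ({r | Ideal.span ({r * x} : Set R) = Ideal.span {x}} : Finset R).filter
      (· * x = a) = ({r | x * r = a} : Finset R) := by
    ext r
    simp only [mem_filter, mem_univ, true_and, mul_comm x r]
    exact ⟨And.right, fun hr => ⟨hr ▸ ha.2, hr⟩⟩
  rw [hfiber, card_filter_mul_eq, if_pos (Ideal.span_singleton_le_span_singleton.mp ha.2.le),
    card_filter_mul_eq_zero_of_span_eq ha.2.symm]

lemma sum_filter_dvd_eq_add {M : Type*} [AddCommMonoid M] (f : R → M) (x : R) :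
    ∑ a with a ∣ x, f a =
      ∑ a with Ideal.span ({x} : Set R) < Ideal.span {a}, f a +
        ∑ a with Ideal.span ({a} : Set R) = Ideal.span {x}, f a := by
  rw [← Finset.sum_union (Finset.disjoint_filter.mpr fun a _ hlt heq => hlt.ne heq.symm)]
  refine Finset.sum_congr ?_ fun _ _ => rfl
  ext a
  simp only [mem_filter, mem_univ, true_and, mem_union, ← Ideal.span_singleton_le_span_singleton,
    le_iff_lt_or_eq, eq_comm]

end MultiplicationCounts

section UniformStationary

variable {R : Type} [CommRing R] [Fintype R] {α : ℝ} {β : R → ℝ} {π : R → ℝ}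

lemma sum_mul_Mmat_of_uniform (hβ : ∀ x, β x = 1 / (Fintype.card R : ℝ)) (b : R) :
    ∑ a, π a * Mmat R α β a b =
      α / Fintype.card R * ∑ a, π a +
        (1 - α) / Fintype.card R * ∑ a with a ∣ b, (#{r | r * a = 0} : ℝ) * π a := by
  have hB : ∀ a, Bmat R β a b =
      (if a ∣ b then (#{r | r * a = 0} : ℝ) else 0) / Fintype.card R := by
    intro a
    simp only [Bmat, hβ, Finset.sum_const, nsmul_eq_mul, card_filter_mul_eq]
    split_ifs <;> simp [div_eq_mul_inv]
  simp only [Mmat, hB, Finset.sum_filter, Finset.mul_sum, Finset.sum_add_distrib.symm]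
  refine Finset.sum_congr rfl fun a _ => ?_
  split_ifs <;> ring

lemma stationary_eq_of_uniform (hβ : ∀ x, β x = 1 / (Fintype.card R : ℝ))
    (hπsum : ∑ x, π x = 1) (hπstat : ∀ b : R, ∑ a : R, π a * Mmat R α β a b = π b) (b : R) :
    π b = α / Fintype.card R +
      (1 - α) / Fintype.card R * ∑ a with a ∣ b, (#{r | r * a = 0} : ℝ) * π a := by
  rw [← hπstat, sum_mul_Mmat_of_uniform hβ, hπsum, mul_one]

lemma stationary_apply_eq_of_span_eq (hβ : ∀ x, β x = 1 / (Fintype.card R : ℝ))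
    (hπsum : ∑ x, π x = 1) (hπstat : ∀ b : R, ∑ a : R, π a * Mmat R α β a b = π b) {a b : R}
    (h : Ideal.span ({a} : Set R) = Ideal.span {b}) : π a = π b := by
  have hdvd : ∀ c : R, c ∣ a ↔ c ∣ b := fun c => by
    rw [← Ideal.span_singleton_le_span_singleton, ← Ideal.span_singleton_le_span_singleton, h]
  rw [stationary_eq_of_uniform hβ hπsum hπstat a, stationary_eq_of_uniform hβ hπsum hπstat b]
  simp only [hdvd]

end UniformStationary

theorem stmt16_general (R : Type) [CommRing R] [Fintype R]
    (α : ℝ)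
    (β : R → ℝ) (hβ : ∀ x, β x = 1 / (Fintype.card R : ℝ))
    (π : R → ℝ) (hπsum : ∑ x, π x = 1)
    (hπstat : ∀ b : R, ∑ a : R, π a * Mmat R α β a b = π b) :
    ∀ x : R,
      (1 - (1 - α) *
          ((Finset.univ.filter
            (fun r => IsUnit (Ideal.Quotient.mk (annId x) r))).card : ℝ) /
          (Fintype.card R : ℝ)) * π x =
        α / (Fintype.card R : ℝ) +
          ((1 - α) / (Fintype.card R : ℝ)) *
            ∑ y ∈ Finset.univ.filter
              (fun y => Ideal.span ({x} : Set R) < Ideal.span {y}),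
              ((Finset.univ.filter (fun r => r * y = 0)).card : ℝ) * π y := by
  intro x
  have hassociates : ∑ a with Ideal.span ({a} : Set R) = Ideal.span {x},
      (#{r | r * a = 0} : ℝ) * π a = #{r | IsUnit (Ideal.Quotient.mk (annId x) r)} * π x := by
    rw [card_filter_isUnit_mk_annId, Nat.cast_sum, Finset.sum_mul]
    refine Finset.sum_congr rfl fun a ha => ?_
    rw [stationary_apply_eq_of_span_eq hβ hπsum hπstat (mem_filter.mp ha).2]
  have hx := stationary_eq_of_uniform hβ hπsum hπstat x
  rw [sum_filter_dvd_eq_add, hassociates] at hx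
  linear_combination hx

/-- The recursion for the stationary distribution when multiplication is also
uniform: `(1 − (1−α)·|F_x|/|R|)·π(x)
  = α/|R| + ((1−α)/|R|)·∑_{y : xR ⊊ yR} |ann(y)|·π(y)`. -/
theorem stmt16 (R : Type) [CommRing R] [Fintype R]
    (α : ℝ) (hα0 : 0 < α) (hα1 : α < 1)
    (β : R → ℝ) (hβ : ∀ x, β x = 1 / (Fintype.card R : ℝ))
    (π : R → ℝ) (hπ0 : ∀ x, 0 ≤ π x) (hπsum : ∑ x, π x = 1)
    (hπstat : ∀ b : R, ∑ a : R, π a * Mmat R α β a b = π b) :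
    ∀ x : R,
      (1 - (1 - α) *
          ((Finset.univ.filter
            (fun r => IsUnit (Ideal.Quotient.mk (annId x) r))).card : ℝ) /
          (Fintype.card R : ℝ)) * π x =
        α / (Fintype.card R : ℝ) +
          ((1 - α) / (Fintype.card R : ℝ)) *
            ∑ y ∈ Finset.univ.filter
              (fun y => Ideal.span ({x} : Set R) < Ideal.span {y}),
              ((Finset.univ.filter (fun r => r * y = 0)).card : ℝ) * π y :=
  stmt16_general R α β hβ π hπsum hπstat
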